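/- Fix γ ∈ (0,1] and a natural number n with n ≥ π/√γ, and set R = 1/cos(π/n). For x ∈ ℝ², let V_x = {x + R·(cos((2k+1)π/n), sin((2k+1)π/n)) : k = 0, 1, …, n−1} be the vertex set of the regular n-gon circumscribing the unit circle centered at x. Then for every halfspace classifier h (h(z) = 1 iff ⟨a,z⟩ + b ≥ 0, a ≠ 0) and every x ∈ ℝ²: (i) if there exists z with ‖z − x‖₂ ≤ 1 and h(z) ≠ h(x), then there exists v ∈ V_x with h(v) ≠ h(x); and (ii) if there exists v ∈ V_x with h(v) ≠ h(x), then there exists z with ‖z − x‖₂ ≤ 1 + γ and h(z) ≠ h(x). (Thus the n = O(π/√γ) polygon vertices tolerantly witness membership in the margin, between radii 1 and 1+γ.) -/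

import Mathlib

open MeasureTheory Set
open scoped ENNReal symmDiff

namespace AdvRobust

variable {X : Type*}

/-- Error region of a hypothesis `h : X → Bool`, as a subset of `X × Bool`. -/
def errSet (h : X → Bool) : Set (X × Bool) := {p | h p.1 ≠ p.2}

/-- Margin area of a hypothesis w.r.t. perturbation type `U`, as a subset of `X × Bool`. -/
def marSet (U : X → Set X) (h : X → Bool) : Set (X × Bool) :=
  {p | ∃ z ∈ U p.1, h z ≠ h p.1}

/-- Margin area of a hypothesis, identified with a subset of the domain `X`. -/
def marSetX (U : X → Set X) (h : X → Bool) : Set X :=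
  {x | ∃ z ∈ U x, h z ≠ h x}

/-- Robust loss `L^U_P(h) = P(err(h) ∪ mar_U(h))`. -/
noncomputable def robustLoss [MeasurableSpace X] (U : X → Set X)
    (P : Measure (X × Bool)) (h : X → Bool) : ℝ≥0∞ :=
  P (errSet h ∪ marSet U h)

/-- Binary (0/1) loss `L^{0/1}_P(h) = P(err(h))`. -/
noncomputable def binLoss [MeasurableSpace X]
    (P : Measure (X × Bool)) (h : X → Bool) : ℝ≥0∞ :=
  P (errSet h)

/-- Robust loss via the pointwise robust loss set `{(x,y) | ∃ z ∈ U x, h z ≠ y}`. -/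
noncomputable def robustLoss' [MeasurableSpace X] (U : X → Set X)
    (P : Measure (X × Bool)) (h : X → Bool) : ℝ≥0∞ :=
  P {p : X × Bool | ∃ z ∈ U p.1, h z ≠ p.2}

/-- A family of sets `G` shatters a finite set `B`. -/
def Shatters {Z : Type*} (G : Set (Set Z)) (B : Finset Z) : Prop :=
  ∀ F ⊆ B, ∃ g ∈ G, ∀ z ∈ B, (z ∈ g ↔ z ∈ F)

/-- The VC-dimension of `G` is at most `d`. -/
def VCdimLE {Z : Type*} (G : Set (Set Z)) (d : ℕ) : Prop :=
  ∀ B : Finset Z, Shatters G B → B.card ≤ d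

/-- The VC-dimension of `G` equals `d`. -/
def VCdimEq {Z : Type*} (G : Set (Set Z)) (d : ℕ) : Prop :=
  VCdimLE G d ∧ ∃ B : Finset Z, Shatters G B ∧ B.card = d

/-- The family `{h⁻¹(1) : h ∈ H}` associated with a class of Boolean hypotheses. -/
def classSets (H : Set (X → Bool)) : Set (Set X) := (fun h => h ⁻¹' {true}) '' H

/-- The margin class `{mar_U(h) : h ∈ H}`. -/
def marginClass (U : X → Set X) (H : Set (X → Bool)) : Set (Set (X × Bool)) :=
  (marSet U) '' H

/-- The halfspace classifier in `ℝ²`: `hs a b z = 1` iff `⟨a,z⟩ + b ≥ 0`. -/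
noncomputable def hs (a : ℝ × ℝ) (b : ℝ) (z : ℝ × ℝ) : Bool :=
  if 0 ≤ a.1 * z.1 + a.2 * z.2 + b then true else false

/-- The Euclidean (`ℓ²`) norm on `ℝ × ℝ`. -/
noncomputable def nrm2 (z : ℝ × ℝ) : ℝ := Real.sqrt (z.1 ^ 2 + z.2 ^ 2)

/-- The `k`-th vertex of the regular `n`-gon of circumradius `R` (circumscribing the unit
circle) centered at `x`: `x + R·(cos((2k+1)π/n), sin((2k+1)π/n))`. -/
noncomputable def vtx (x : ℝ × ℝ) (R : ℝ) (n k : ℕ) : ℝ × ℝ :=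
  (x.1 + R * Real.cos ((2 * (k : ℝ) + 1) * Real.pi / (n : ℝ)),
   x.2 + R * Real.sin ((2 * (k : ℝ) + 1) * Real.pi / (n : ℝ)))

/-!
Let `f = ⟪a, ·⟫`. Every direction lies within angle `π / n` of a vertex direction of the polygon,
so, since `R cos (π / n) = 1`, some vertex `v⁺` has `f (v⁺ - x) ≥ ‖a‖` and some `v⁻` has
`f (v⁻ - x) ≤ -‖a‖`. By Cauchy–Schwarz every point `z` of the unit ball around `x` lies between
`v⁻` and `v⁺` in `f`, and `hs a b` is monotone in `f`, so if both vertices agreed with `x` then so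
would `z`. Conversely, every vertex is at distance
`R = 1 / cos (π / n) ≤ 1 / (1 - (π / n) ^ 2 / 2) ≤ 1 / (1 - γ / 2) ≤ 1 + γ` from `x`.
-/

open Real

def dot (a u : ℝ × ℝ) : ℝ := a.1 * u.1 + a.2 * u.2

lemma dot_sub (a y x : ℝ × ℝ) : dot a (y - x) = dot a y - dot a x := by
  simp only [dot, Prod.fst_sub, Prod.snd_sub]; ring

lemma neg_dot (a u : ℝ × ℝ) : dot (-a) u = -dot a u := by
  simp only [dot, Prod.fst_neg, Prod.snd_neg]; ring

lemma nrm2_neg (a : ℝ × ℝ) : nrm2 (-a) = nrm2 a := by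
  simp only [nrm2, Prod.fst_neg, Prod.snd_neg, neg_sq]

lemma abs_dot_le_nrm2_mul_nrm2 (a u : ℝ × ℝ) : |dot a u| ≤ nrm2 a * nrm2 u := by
  rw [← sqrt_sq_eq_abs, nrm2, nrm2, ← sqrt_mul (by positivity)]
  exact sqrt_le_sqrt (by unfold dot; nlinarith [sq_nonneg (a.1 * u.2 - a.2 * u.1)])

lemma hs_le_hs_of_dot_le {a y z : ℝ × ℝ} (b : ℝ) (h : dot a z ≤ dot a y) :
    hs a b z ≤ hs a b y := by
  unfold hs
  split_ifs with hz hy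
  · exact le_rfl
  · exact (hy (by unfold dot at h; linarith)).elim
  · exact Bool.false_le _
  · exact le_rfl

noncomputable def polygonAngle (n k : ℕ) : ℝ := (2 * k + 1) * π / n

lemma vtx_sub (x : ℝ × ℝ) (R : ℝ) (n k : ℕ) :
    vtx x R n k - x = (R * cos (polygonAngle n k), R * sin (polygonAngle n k)) := by
  ext <;> simp [vtx, polygonAngle]

lemma nrm2_vtx_sub (x : ℝ × ℝ) (R : ℝ) (n k : ℕ) : nrm2 (vtx x R n k - x) = |R| := by
  rw [vtx_sub, nrm2, ← sqrt_sq_eq_abs]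
  congr 1
  linear_combination R ^ 2 * sin_sq_add_cos_sq (polygonAngle n k)

lemma exists_cos_pi_div_le_cos_polygonAngle_sub (φ : ℝ) {n : ℕ} (hn : n ≠ 0) :
    ∃ k < n, cos (π / n) ≤ cos (polygonAngle n k - φ) := by
  have hn' : (0 : ℝ) < n := by positivity
  set t := toIcoMod two_pi_pos 0 φ
  have ht : t ∈ Ico 0 (2 * π) := by simpa using toIcoMod_mem_Ico two_pi_pos 0 φ
  have hφ : ∀ θ, cos (θ - φ) = cos (θ - t) := fun θ => by
    rw [← toIcoMod_add_toIcoDiv_zsmul two_pi_pos 0 φ, zsmul_eq_mul, ← sub_sub,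
      cos_sub_int_mul_two_pi]
  set s := t * n / (2 * π)
  have hs0 : 0 ≤ s := by have := ht.1; positivity
  have hsn : s < n := by
    rw [div_lt_iff₀ two_pi_pos]; nlinarith [ht.2]
  refine ⟨⌊s⌋₊, (Nat.floor_lt hs0).2 hsn, ?_⟩
  have hdiff : polygonAngle n ⌊s⌋₊ - t = (2 * ⌊s⌋₊ + 1 - 2 * s) * (π / n) := by
    simp only [polygonAngle, s]; field_simp
  have hfrac : |2 * (⌊s⌋₊ : ℝ) + 1 - 2 * s| ≤ 1 := by
    rw [abs_le]; constructor <;> linarith [Nat.floor_le hs0, Nat.lt_floor_add_one s]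
  have hle : |polygonAngle n ⌊s⌋₊ - t| ≤ π / n := by
    rw [hdiff, abs_mul, abs_of_pos (by positivity : 0 < π / n)]
    exact mul_le_of_le_one_left (by positivity) hfrac
  rw [hφ, ← cos_abs (_ - t)]
  exact cos_le_cos_of_nonneg_of_le_pi (abs_nonneg _)
    (div_le_self pi_pos.le (by exact_mod_cast Nat.one_le_iff_ne_zero.2 hn)) hle

lemma exists_nrm2_mul_cos_le_dot_polygon (a : ℝ × ℝ) {n : ℕ} (hn : n ≠ 0) :
    ∃ k < n, nrm2 a * cos (π / n) ≤ dot a (cos (polygonAngle n k), sin (polygonAngle n k)) := by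
  set c : ℂ := ⟨a.1, a.2⟩
  have hc : ‖c‖ = nrm2 a := by
    rw [Complex.norm_def, Complex.normSq_mk, nrm2]; ring_nf
  obtain ⟨k, hk, hcos⟩ := exists_cos_pi_div_le_cos_polygonAngle_sub c.arg hn
  refine ⟨k, hk, ?_⟩
  have hpolar : dot a (cos (polygonAngle n k), sin (polygonAngle n k)) =
      ‖c‖ * cos (polygonAngle n k - c.arg) := by
    have hre : ‖c‖ * cos c.arg = a.1 := Complex.norm_mul_cos_arg c
    have him : ‖c‖ * sin c.arg = a.2 := Complex.norm_mul_sin_arg c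
    rw [cos_sub, dot]
    linear_combination -cos (polygonAngle n k) * hre - sin (polygonAngle n k) * him
  rw [hpolar, hc]
  exact mul_le_mul_of_nonneg_left hcos (sqrt_nonneg _)

lemma exists_vtx_nrm2_le_dot_sub (a x : ℝ × ℝ) {n : ℕ} (hn : n ≠ 0) {R : ℝ} (hR0 : 0 ≤ R)
    (hR : R * cos (π / n) = 1) : ∃ k < n, nrm2 a ≤ dot a (vtx x R n k - x) := by
  obtain ⟨k, hk, hdot⟩ := exists_nrm2_mul_cos_le_dot_polygon a hn
  refine ⟨k, hk, ?_⟩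
  have hscale : dot a (vtx x R n k - x) =
      R * dot a (cos (polygonAngle n k), sin (polygonAngle n k)) := by
    rw [vtx_sub, dot, dot]; ring
  calc nrm2 a = R * (nrm2 a * cos (π / n)) := by linear_combination -nrm2 a * hR
    _ ≤ _ := by rw [hscale]; exact mul_le_mul_of_nonneg_left hdot hR0

lemma exists_vtx_hs_ne_of_hs_ne {a : ℝ × ℝ} (b : ℝ) {x z : ℝ × ℝ} {n : ℕ} (hn : n ≠ 0)
    {R : ℝ} (hR0 : 0 ≤ R) (hR : R * cos (π / n) = 1) (hz : nrm2 (z - x) ≤ 1)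
    (hne : hs a b z ≠ hs a b x) : ∃ k < n, hs a b (vtx x R n k) ≠ hs a b x := by
  obtain ⟨k₁, hk₁, hup⟩ := exists_vtx_nrm2_le_dot_sub a x hn hR0 hR
  obtain ⟨k₂, hk₂, hdown⟩ := exists_vtx_nrm2_le_dot_sub (-a) x hn hR0 hR
  rw [nrm2_neg, neg_dot] at hdown
  have hzx : |dot a (z - x)| ≤ nrm2 a := by
    simpa using (abs_dot_le_nrm2_mul_nrm2 a (z - x)).trans
      (mul_le_of_le_one_right (sqrt_nonneg _) hz)
  rw [dot_sub] at hup hdown hzx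
  rw [abs_le] at hzx
  have hz₁ := hs_le_hs_of_dot_le b (z := z) (y := vtx x R n k₁) (by linarith)
  have hz₂ := hs_le_hs_of_dot_le b (z := vtx x R n k₂) (y := z) (by linarith)
  by_contra! hall
  rw [hall k₁ hk₁] at hz₁
  rw [hall k₂ hk₂] at hz₂
  exact hne (le_antisymm hz₁ hz₂)

lemma one_sub_half_le_cos_pi_div {γ : ℝ} (hγ : 0 < γ) {n : ℕ} (hn : π / √γ ≤ n) :
    1 - γ / 2 ≤ cos (π / n) := by
  have hπn : π / n ≤ √γ := by
    rwa [div_le_comm₀ (lt_of_lt_of_le (by positivity) hn) (sqrt_pos.2 hγ)]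
  have hsq : (π / n) ^ 2 ≤ γ := by
    simpa [sq_sqrt hγ.le] using pow_le_pow_left₀ (by positivity) hπn 2
  linarith [one_sub_sq_div_two_le_cos (x := π / n)]

lemma one_div_le_one_add_of_one_sub_half_le {γ c : ℝ} (hγ : γ ∈ Ioc 0 1)
    (hc : 1 - γ / 2 ≤ c) : 1 / c ≤ 1 + γ := by
  obtain ⟨hγ0, hγ1⟩ := hγ
  rw [div_le_iff₀ (by linarith)]
  nlinarith

theorem statement9_general (γ : ℝ) (hγ : γ ∈ Set.Ioc (0:ℝ) 1) (n : ℕ)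
    (hn : Real.pi / Real.sqrt γ ≤ (n : ℝ))
    (R : ℝ) (hR : R = 1 / Real.cos (Real.pi / (n : ℝ)))
    (a : ℝ × ℝ) (b : ℝ) (x : ℝ × ℝ) :
    ((∃ z : ℝ × ℝ, nrm2 (z - x) ≤ 1 ∧ hs a b z ≠ hs a b x) →
        ∃ k < n, hs a b (vtx x R n k) ≠ hs a b x) ∧
    ((∃ k < n, hs a b (vtx x R n k) ≠ hs a b x) →
        ∃ z : ℝ × ℝ, nrm2 (z - x) ≤ 1 + γ ∧ hs a b z ≠ hs a b x) := by
  have hcos := one_sub_half_le_cos_pi_div hγ.1 hn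
  have hcos_pos : 0 < cos (π / n) := by linarith [hγ.2]
  have hn0 : n ≠ 0 :=
    (Nat.cast_pos.1 ((div_pos pi_pos (sqrt_pos.2 hγ.1)).trans_le hn)).ne'
  have hR0 : 0 ≤ R := by rw [hR]; positivity
  refine ⟨fun ⟨z, hz, hne⟩ => ?_, fun ⟨k, _, hne⟩ => ?_⟩
  · exact exists_vtx_hs_ne_of_hs_ne b hn0 hR0 (by rw [hR]; field_simp) hz hne
  · refine ⟨vtx x R n k, ?_, hne⟩
    rw [nrm2_vtx_sub, abs_of_nonneg hR0, hR]
    exact one_div_le_one_add_of_one_sub_half_le hγ hcos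

/-- For `γ ∈ (0,1]`, `n ≥ π/√γ` and `R = 1/cos(π/n)`, the `n` vertices of
the circumscribing regular `n`-gon centered at `x` tolerantly witness the margin for any
halfspace: an adversarial point within radius 1 yields a disagreeing vertex, and a
disagreeing vertex yields an adversarial point within radius `1 + γ`. -/
theorem statement9 (γ : ℝ) (hγ : γ ∈ Set.Ioc (0:ℝ) 1) (n : ℕ)
    (hn : Real.pi / Real.sqrt γ ≤ (n : ℝ))
    (R : ℝ) (hR : R = 1 / Real.cos (Real.pi / (n : ℝ)))
    (a : ℝ × ℝ) (ha : a ≠ 0) (b : ℝ) (x : ℝ × ℝ) :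
    ((∃ z : ℝ × ℝ, nrm2 (z - x) ≤ 1 ∧ hs a b z ≠ hs a b x) →
        ∃ k < n, hs a b (vtx x R n k) ≠ hs a b x) ∧
    ((∃ k < n, hs a b (vtx x R n k) ≠ hs a b x) →
        ∃ z : ℝ × ℝ, nrm2 (z - x) ≤ 1 + γ ∧ hs a b z ≠ hs a b x) :=
  statement9_general γ hγ n hn R hR a b x

end AdvRobust
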